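/- arXiv:1705.06076 — 8 statements merged into one kernel-verified Lean document; each statement's English description precedes it below -/
import Mathlib

section
/- For any scalars u, v with v ∉ {−1,−2,…,−7}, u ≠ v, u ≠ v+1, the sequence b_i = 6(u+i)/((v+i)(v+i+1)), i = 1,…,6, satisfies the four equations: b_4(b_1−b_2)−b_1(b_3−b_4) = b_1−3b_2+3b_3−b_4; b_5(b_2−b_3)−b_2(b_4−b_5) = b_2−3b_3+3b_4−b_5; b_6(b_3−b_4)−b_3(b_5−b_6) = b_3−3b_4+3b_5−b_6; and b_6(b_1−3b_2+3b_3−b_4)−b_1(b_3−3b_4+3b_5−b_6) = (9/10)(b_1−5b_2+10b_3−10b_4+5b_5−b_6). -/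
/-!
The first three equations are translates of a single relation among four consecutive
coefficients, and translating the index by `i` amounts to replacing `(u, v)` by `(u + i, v + i)`.
So it suffices to check one four-term and one six-term relation starting at index `0`; both are
rational identities in `u` and `v` whose only denominators are `v, v + 1, …, v + 6`.
-/

/-- The defining equations `R⁵₁, R⁵₂, R⁵₃, R⁷₁` of 8-dimensional graded thread
`W⁺`-modules of type `(1,1,…,1)`. -/
def Rsys {K : Type*} [Field K] (b1 b2 b3 b4 b5 b6 : K) : Prop :=
  (b4 * (b1 - b2) - b1 * (b3 - b4) = b1 - 3 * b2 + 3 * b3 - b4) ∧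
  (b5 * (b2 - b3) - b2 * (b4 - b5) = b2 - 3 * b3 + 3 * b4 - b5) ∧
  (b6 * (b3 - b4) - b3 * (b5 - b6) = b3 - 3 * b4 + 3 * b5 - b6) ∧
  (b6 * (b1 - 3 * b2 + 3 * b3 - b4) - b1 * (b3 - 3 * b4 + 3 * b5 - b6) =
    (9 / 10) * (b1 - 5 * b2 + 10 * b3 - 10 * b4 + 5 * b5 - b6))

section
variable {K : Type*} [Field K]

def threadCoeff (u v : K) (i : ℕ) : K := 6 * (u + i) / ((v + i) * (v + i + 1))

theorem threadCoeff_shift (u v : K) (i k : ℕ) :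
    threadCoeff (u + i) (v + i) k = threadCoeff u v (i + k) := by
  simp only [threadCoeff, Nat.cast_add, add_assoc]

theorem threadCoeff_rel_five (u v : K) (hv : ∀ k : ℕ, k ≤ 4 → v + k ≠ 0) :
    let b := threadCoeff u v
    b 3 * (b 0 - b 1) - b 0 * (b 2 - b 3) = b 0 - 3 * b 1 + 3 * b 2 - b 3 := by
  have h0 : v ≠ 0 := by simpa using hv 0 (by norm_num)
  have h1 : v + 1 ≠ 0 := by simpa using hv 1 (by norm_num)
  have h2 : v + 2 ≠ 0 := by simpa using hv 2 (by norm_num)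
  have h3 : v + 3 ≠ 0 := by simpa using hv 3 (by norm_num)
  have h4 : v + 4 ≠ 0 := by simpa using hv 4 (by norm_num)
  norm_num [threadCoeff, add_assoc]
  field_simp
  ring

theorem threadCoeff_rel_seven [CharZero K] (u v : K) (hv : ∀ k : ℕ, k ≤ 6 → v + k ≠ 0) :
    let b := threadCoeff u v
    b 5 * (b 0 - 3 * b 1 + 3 * b 2 - b 3) - b 0 * (b 2 - 3 * b 3 + 3 * b 4 - b 5) =
      (9 / 10) * (b 0 - 5 * b 1 + 10 * b 2 - 10 * b 3 + 5 * b 4 - b 5) := by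
  have h0 : v ≠ 0 := by simpa using hv 0 (by norm_num)
  have h1 : v + 1 ≠ 0 := by simpa using hv 1 (by norm_num)
  have h2 : v + 2 ≠ 0 := by simpa using hv 2 (by norm_num)
  have h3 : v + 3 ≠ 0 := by simpa using hv 3 (by norm_num)
  have h4 : v + 4 ≠ 0 := by simpa using hv 4 (by norm_num)
  have h5 : v + 5 ≠ 0 := by simpa using hv 5 (by norm_num)
  have h6 : v + 6 ≠ 0 := by simpa using hv 6 (by norm_num)
  norm_num [threadCoeff, add_assoc]
  field_simp
  ring

theorem rsys_threadCoeff [CharZero K] (u v : K) (hv : ∀ i : ℕ, 1 ≤ i → i ≤ 7 → v + i ≠ 0) :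
    Rsys (threadCoeff u v 1) (threadCoeff u v 2) (threadCoeff u v 3)
      (threadCoeff u v 4) (threadCoeff u v 5) (threadCoeff u v 6) := by
  have hshift (i n : ℕ) (hi : 1 ≤ i) (hn : i + n ≤ 7) : ∀ k : ℕ, k ≤ n → v + i + k ≠ 0 :=
    fun k hk => by simpa [add_assoc] using hv (i + k) (by omega) (by omega)
  have rel_five (i : ℕ) (hi : 1 ≤ i) (hi' : i ≤ 3) :=
    threadCoeff_rel_five (u + i) (v + i) (hshift i 4 hi (by omega))
  have rel_seven := threadCoeff_rel_seven (u + (1 : ℕ)) (v + (1 : ℕ)) (hshift 1 6 le_rfl le_rfl)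
  simp only [threadCoeff_shift, add_zero] at rel_five rel_seven
  exact ⟨rel_five 1 le_rfl (by norm_num), rel_five 2 (by norm_num) (by norm_num),
    rel_five 3 (by norm_num) le_rfl, rel_seven⟩

end

theorem stmt_4_general {K : Type*} [Field K] [CharZero K] (u v : K)
    (hv : ∀ i : ℕ, 1 ≤ i → i ≤ 7 → v + (i : K) ≠ 0)
    (b : ℕ → K)
    (hb : ∀ i : ℕ, 1 ≤ i → i ≤ 6 →
      b i = 6 * (u + (i : K)) / ((v + (i : K)) * (v + (i : K) + 1))) :
    Rsys (b 1) (b 2) (b 3) (b 4) (b 5) (b 6) := by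
  simp (disch := omega) only [hb]
  exact rsys_threadCoeff u v hv

/-- the family `b_i = 6(u+i)/((v+i)(v+i+1))` satisfies the system. -/
theorem stmt_4 {K : Type*} [Field K] [CharZero K] (u v : K)
    (hv : ∀ i : ℕ, 1 ≤ i → i ≤ 7 → v + (i : K) ≠ 0)
    (hu1 : u ≠ v) (hu2 : u ≠ v + 1)
    (b : ℕ → K)
    (hb : ∀ i : ℕ, 1 ≤ i → i ≤ 6 →
      b i = 6 * (u + (i : K)) / ((v + (i : K)) * (v + (i : K) + 1))) :
    Rsys (b 1) (b 2) (b 3) (b 4) (b 5) (b 6) :=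
  stmt_4_general u v hv b hb
end

section
/- The constant sequence b_1 = b_2 = ⋯ = b_6 = t satisfies, for any scalar t, all four equations: b_4(b_1−b_2)−b_1(b_3−b_4) = b_1−3b_2+3b_3−b_4; b_5(b_2−b_3)−b_2(b_4−b_5) = b_2−3b_3+3b_4−b_5; b_6(b_3−b_4)−b_3(b_5−b_6) = b_3−3b_4+3b_5−b_6; b_6(b_1−3b_2+3b_3−b_4)−b_1(b_3−3b_4+3b_5−b_6) = (9/10)(b_1−5b_2+10b_3−10b_4+5b_5−b_6). Conversely, if a solution (b_1,…,b_6) of this system satisfies b_2 = b_3 = b_4 = t, then b_1 = b_5 = b_6 = t. -/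
/-- constant tuples solve the system, and every solution with
`b2 = b3 = b4 = t` has `b1 = b5 = b6 = t`. -/
theorem stmt_5 {K : Type*} [Field K] [CharZero K] :
    (∀ t : K, Rsys t t t t t t) ∧
    (∀ t b1 b2 b3 b4 b5 b6 : K, Rsys b1 b2 b3 b4 b5 b6 →
      b2 = t → b3 = t → b4 = t → b1 = t ∧ b5 = t ∧ b6 = t) := by
  constructor
  · intro t
    refine ⟨by ring, by ring, by ring, by ring⟩
  · intro t b1 b2 b3 b4 b5 b6 h hb2 hb3 hb4
    subst hb2; subst hb3; subst hb4
    obtain ⟨e1, e2, e3, e4⟩ := h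
    -- b5 = b4 always
    have h5 : b5 = b4 := by
      rcases eq_or_ne (b4 + 1) 0 with h1 | h1
      · linear_combination (-(1/2) : K) * e3 + (-b5/2 + b6/2) * h1
      · have h2 : (b4 + 1) * (b5 - b4) = 0 := by linear_combination e2
        exact sub_eq_zero.mp ((mul_eq_zero.mp h2).resolve_left h1)
    subst h5
    rcases eq_or_ne b5 1 with h1 | h1
    · -- b5 = 1 : get b6 from e3, then b1 from e4
      have h6 : b6 = b5 := by
        have h2 : (b5 + 1) * (b6 - b5) = 0 := by linear_combination e3
        have h3 : (b5 : K) + 1 ≠ 0 := by rw [h1]; norm_num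
        exact sub_eq_zero.mp ((mul_eq_zero.mp h2).resolve_left h3)
      refine ⟨?_, rfl, h6⟩
      rw [h6, h1] at e4
      rw [h1]
      linear_combination (10 : K) * e4
    · rcases eq_or_ne (b5 + 1) 0 with h2 | h2
      · -- b5 = -1 : get b1 from e1, then b6 from e4
        have hb1 : b1 = b5 := by
          have h3 : (b5 - 1) * (b1 - b5) = 0 := by linear_combination e1
          have h4 : (b5 : K) - 1 ≠ 0 := sub_ne_zero.mpr h1
          exact sub_eq_zero.mp ((mul_eq_zero.mp h3).resolve_left h4)
        refine ⟨hb1, rfl, ?_⟩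
        rw [hb1] at e4
        linear_combination (-10 : K) * e4 + (10 * (b6 - b5)) * h2
      · -- generic case
        have hb1 : b1 = b5 := by
          have h3 : (b5 - 1) * (b1 - b5) = 0 := by linear_combination e1
          have h4 : (b5 : K) - 1 ≠ 0 := sub_ne_zero.mpr h1
          exact sub_eq_zero.mp ((mul_eq_zero.mp h3).resolve_left h4)
        have h6 : b6 = b5 := by
          have h3 : (b5 + 1) * (b6 - b5) = 0 := by linear_combination e3
          exact sub_eq_zero.mp ((mul_eq_zero.mp h3).resolve_left h2)
        exact ⟨hb1, rfl, h6⟩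
end

section
/- There is no solution (b_1, b_2, …, b_6) over a field of characteristic zero of the system R^5_1: b_4(b_1−b_2)−b_1(b_3−b_4)=b_1−3b_2+3b_3−b_4; R^5_2: b_5(b_2−b_3)−b_2(b_4−b_5)=b_2−3b_3+3b_4−b_5; R^5_3: b_6(b_3−b_4)−b_3(b_5−b_6)=b_3−3b_4+3b_5−b_6; R^7_1: b_6(b_1−3b_2+3b_3−b_4)−b_1(b_3−3b_4+3b_5−b_6)=(9/10)(b_1−5b_2+10b_3−10b_4+5b_5−b_6) with b_3 = 3 and b_4 = 2. -/
/-- no solution with `b3 = 3`, `b4 = 2`. -/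
theorem stmt_6 {K : Type*} [Field K] [CharZero K] :
    ¬ ∃ b1 b2 b3 b4 b5 b6 : K, Rsys b1 b2 b3 b4 b5 b6 ∧ b3 = 3 ∧ b4 = 2 := by
  rintro ⟨b1, b2, b3, b4, b5, b6, ⟨h1, h2, h3, h4⟩, hb3, hb4⟩
  subst hb3; subst hb4
  have hb2 : b2 = 7 := by linear_combination h1
  subst hb2
  have hb5 : b5 = 3 / 2 := by linear_combination h2 / 12
  subst hb5
  have hb6 : b6 = 6 / 5 := by linear_combination h3 / 5
  subst hb6
  have : (3 : K) / 100 = 0 := by linear_combination h4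
  norm_num at this
end

section
/- There is no solution (b_1, …, b_6) over a field of characteristic zero of the system R^5_1, R^5_2, R^5_3, R^7_1 (the defining equations for 8-dimensional type-(1,1,…,1) graded thread W+-modules) with b_2 = −2 and b_3 = −3. -/
/-- no solution with `b2 = −2`, `b3 = −3`. -/
theorem stmt_7 {K : Type*} [Field K] [CharZero K] :
    ¬ ∃ b1 b2 b3 b4 b5 b6 : K, Rsys b1 b2 b3 b4 b5 b6 ∧ b2 = -2 ∧ b3 = -3 := by
  rintro ⟨b1, b2, b3, b4, b5, b6, ⟨h1, h2, h3, h4⟩, rfl, rfl⟩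
  have hb4 : b4 = -7 := by linear_combination -h2
  subst hb4
  have hb1 : b1 = -3/2 := by linear_combination -(1/12 : K) * h1
  subst hb1
  have hb6 : b6 = 9 := by linear_combination (1/2 : K) * h3
  subst hb6
  have : (36 : K) = 711/20 := by linear_combination h4
  norm_num at this
end

section
/- For all scalars x, y over a field of characteristic zero with y ≠ 9/5, y ≠ −7/5, and 2x − y + 1 ≠ 0, the 6-tuple b_1 = (5xy−17x+10y+2)/(5y−9), b_2 = x, b_3 = y, b_4 = y − 2/5, b_5 = (1/5)(5xy+3x−6)/(2x−y+1), b_6 = (5xy²−2xy−22y+10y²+21x−12)/((2x−y+1)(5y+7)) satisfies the four defining equations R^5_1, R^5_2, R^5_3, R^7_1 of 8-dimensional graded thread W+-modules of type (1,1,…,1). -/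
/-- the two-parameter family `M₂` satisfies the system. -/
theorem stmt_13 {K : Type*} [Field K] [CharZero K] (x y : K)
    (hy1 : y ≠ 9 / 5) (hy2 : y ≠ -(7 / 5)) (hxy : 2 * x - y + 1 ≠ 0) :
    Rsys ((5 * x * y - 17 * x + 10 * y + 2) / (5 * y - 9)) x y (y - 2 / 5)
      ((1 / 5) * (5 * x * y + 3 * x - 6) / (2 * x - y + 1))
      ((5 * x * y ^ 2 - 2 * x * y - 22 * y + 10 * y ^ 2 + 21 * x - 12) /
        ((2 * x - y + 1) * (5 * y + 7))) := by
  have hp : 5 * y - 9 ≠ 0 := fun h => hy1 (by linear_combination h / 5)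
  have hr : 5 * y + 7 ≠ 0 := fun h => hy2 (by linear_combination h / 5)
  -- `field_simp` renormalises `5 * y - 9` etc. and then fails to match them with `hp`, `hxy`, `hr`;
  -- as atoms the denominators are recognised as nonzero.
  generalize hp_def : 5 * y - 9 = p at hp ⊢
  generalize hq_def : 2 * x - y + 1 = q at hxy ⊢
  generalize hr_def : 5 * y + 7 = r at hr ⊢
  refine ⟨?_, ?_, ?_, ?_⟩ <;> field_simp <;> subst p q r <;> ring
end

section
/- Let V be an (n+1)-dimensional graded thread W+-module with basis f_1,…,f_{n+1}, structure constants e_1 f_i = α_i f_{i+1}, e_2 f_j = β_j f_{j+2}, and suppose α_k = 0 for some 1 ≤ k ≤ n. Then V decomposes as a direct sum of the two graded W+-submodules V_1 = span{f_1,…,f_k} and V_2 = span{f_{k+1},…,f_{n+1}} if and only if β_{k−1} = 0 and β_k = 0. -/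
/-- a graded thread `W⁺`-module with `α_k = 0` decomposes as the
direct sum of the invariant subspaces `span{f₁,…,f_k}` and
`span{f_{k+1},…,f_{n+1}}` iff `e₂ f_{k−1} = 0` and `e₂ f_k = 0`
(equivalently `β_{k−1} = β_k = 0`). -/
theorem stmt_16 {K : Type*} [Field K] [CharZero K]
    {V : Type*} [AddCommGroup V] [Module K V]
    (n : ℕ) (E : ℕ → Module.End K V) (f : ℤ → V)
    (hcomm : ∀ i j : ℕ, 1 ≤ i → 1 ≤ j →
      E i * E j - E j * E i = ((j : K) - (i : K)) • E (i + j))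
    (hzero : ∀ j : ℤ, j < 1 ∨ (n : ℤ) + 1 < j → f j = 0)
    (hthread : ∀ i : ℕ, 1 ≤ i → ∀ j : ℤ,
      E i (f j) ∈ Submodule.span K {f ((i : ℤ) + j)})
    (hind : LinearIndependent K (fun j : Set.Icc (1 : ℤ) ((n : ℤ) + 1) => f j))
    (hspan : Submodule.span K (Set.range f) = ⊤)
    (k : ℤ) (hk1 : 1 ≤ k) (hkn : k ≤ (n : ℤ)) (hαk : E 1 (f k) = 0) :
    (IsCompl (Submodule.span K (f '' {j : ℤ | 1 ≤ j ∧ j ≤ k}))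
        (Submodule.span K (f '' {j : ℤ | k + 1 ≤ j ∧ j ≤ (n : ℤ) + 1})) ∧
      (∀ i : ℕ, 1 ≤ i → ∀ v ∈ Submodule.span K (f '' {j : ℤ | 1 ≤ j ∧ j ≤ k}),
        E i v ∈ Submodule.span K (f '' {j : ℤ | 1 ≤ j ∧ j ≤ k})) ∧
      (∀ i : ℕ, 1 ≤ i →
        ∀ v ∈ Submodule.span K (f '' {j : ℤ | k + 1 ≤ j ∧ j ≤ (n : ℤ) + 1}),
        E i v ∈ Submodule.span K (f '' {j : ℤ | k + 1 ≤ j ∧ j ≤ (n : ℤ) + 1})))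
    ↔ (E 2 (f (k - 1)) = 0 ∧ E 2 (f k) = 0) := by
  set A : Set ℤ := {j : ℤ | 1 ≤ j ∧ j ≤ k} with hA
  set B : Set ℤ := {j : ℤ | k + 1 ≤ j ∧ j ≤ (n : ℤ) + 1} with hB
  set V1 := Submodule.span K (f '' A) with hV1
  set V2 := Submodule.span K (f '' B) with hV2
  -- IsCompl always holds
  have hdisj : Disjoint V1 V2 := by
    have h1 : f '' A = (fun j : Set.Icc (1 : ℤ) ((n : ℤ) + 1) => f j) ''
        {x : Set.Icc (1 : ℤ) ((n : ℤ) + 1) | (x : ℤ) ≤ k} := by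
      ext x
      constructor
      · rintro ⟨j, ⟨hj1, hj2⟩, rfl⟩
        exact ⟨⟨j, ⟨hj1, by omega⟩⟩, hj2, rfl⟩
      · rintro ⟨⟨j, hj⟩, hjk, rfl⟩
        exact ⟨j, ⟨hj.1, hjk⟩, rfl⟩
    have h2 : f '' B = (fun j : Set.Icc (1 : ℤ) ((n : ℤ) + 1) => f j) ''
        {x : Set.Icc (1 : ℤ) ((n : ℤ) + 1) | k + 1 ≤ (x : ℤ)} := by
      ext x
      constructor
      · rintro ⟨j, ⟨hj1, hj2⟩, rfl⟩
        exact ⟨⟨j, ⟨by omega, hj2⟩⟩, hj1, rfl⟩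
      · rintro ⟨⟨j, hj⟩, hjk, rfl⟩
        exact ⟨j, ⟨hjk, hj.2⟩, rfl⟩
    rw [hV1, hV2, h1, h2]
    refine hind.disjoint_span_image ?_
    rw [Set.disjoint_left]
    rintro ⟨x, hx⟩ h1 h2
    simp only [Set.mem_setOf_eq] at h1 h2
    omega
  have hsup : V1 ⊔ V2 = ⊤ := by
    rw [hV1, hV2, ← Submodule.span_union, ← hspan]
    apply le_antisymm
    · refine Submodule.span_mono ?_
      rintro x (⟨j, -, rfl⟩ | ⟨j, -, rfl⟩) <;> exact ⟨j, rfl⟩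
    · refine Submodule.span_le.mpr ?_
      rintro x ⟨j, rfl⟩
      by_cases hj : j < 1 ∨ (n : ℤ) + 1 < j
      · rw [hzero j hj]
        exact Submodule.zero_mem _
      · push_neg at hj
        apply Submodule.subset_span
        by_cases hjk : j ≤ k
        · exact Or.inl ⟨j, ⟨hj.1, hjk⟩, rfl⟩
        · exact Or.inr ⟨j, ⟨by omega, hj.2⟩, rfl⟩
  have hcompl : IsCompl V1 V2 := ⟨hdisj, codisjoint_iff.mpr hsup⟩
  -- V2 is always invariant
  have hinv2 : ∀ i : ℕ, 1 ≤ i → ∀ v ∈ V2, E i v ∈ V2 := by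
    intro i hi v hv
    have : Submodule.map (E i) V2 ≤ V2 := by
      rw [hV2, Submodule.map_span]
      refine Submodule.span_le.mpr ?_
      rintro x ⟨y, ⟨j, ⟨hj1, hj2⟩, rfl⟩, rfl⟩
      have ht := hthread i hi j
      by_cases hjn : (i : ℤ) + j ≤ (n : ℤ) + 1
      · refine Submodule.span_le.mpr ?_ ht
        rintro z rfl
        exact Submodule.subset_span ⟨(i : ℤ) + j, ⟨by omega, hjn⟩, rfl⟩
      · rw [hzero ((i : ℤ) + j) (Or.inr (by omega)), Submodule.span_zero_singleton,
          Submodule.mem_bot] at ht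
        rw [ht]
        exact Submodule.zero_mem _
    exact this ⟨v, hv, rfl⟩
  constructor
  · rintro ⟨hc, hinv1, -⟩
    constructor
    · -- E 2 (f (k-1)) = 0
      by_cases hk : k = 1
      · rw [hk]
        norm_num
        rw [hzero 0 (Or.inl (by norm_num))]
        exact map_zero _
      · have hm1 : E 2 (f (k - 1)) ∈ V1 :=
          hinv1 2 (by norm_num) _ (Submodule.subset_span ⟨k - 1, ⟨by omega, by omega⟩, rfl⟩)
        have hm2 : E 2 (f (k - 1)) ∈ V2 := by
          have ht := hthread 2 (by norm_num) (k - 1)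
          have he : ((2 : ℕ) : ℤ) + (k - 1) = k + 1 := by push_cast; ring
          rw [he] at ht
          refine Submodule.span_le.mpr ?_ ht
          rintro z rfl
          exact Submodule.subset_span ⟨k + 1, ⟨le_refl _, by omega⟩, rfl⟩
        exact Submodule.disjoint_def.mp hc.disjoint _ hm1 hm2
    · -- E 2 (f k) = 0
      have ht := hthread 2 (by norm_num) k
      by_cases hk : k = (n : ℤ)
      · rw [hzero (((2 : ℕ) : ℤ) + k) (Or.inr (by omega)), Submodule.span_zero_singleton,
          Submodule.mem_bot] at ht
        exact ht
      · have hm1 : E 2 (f k) ∈ V1 :=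
          hinv1 2 (by norm_num) _ (Submodule.subset_span ⟨k, ⟨hk1, le_refl _⟩, rfl⟩)
        have hm2 : E 2 (f k) ∈ V2 := by
          refine Submodule.span_le.mpr ?_ ht
          rintro z rfl
          exact Submodule.subset_span ⟨((2 : ℕ) : ℤ) + k, ⟨by omega, by omega⟩, rfl⟩
        exact Submodule.disjoint_def.mp hc.disjoint _ hm1 hm2
  · rintro ⟨hβ1, hβ2⟩
    -- key vanishing lemma
    have key : ∀ m : ℕ, 1 ≤ m → ∀ j : ℤ, 1 ≤ j → j ≤ k → k < (m : ℤ) + j →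
        E m (f j) = 0 := by
      intro m
      induction m using Nat.strong_induction_on with
      | _ m IH =>
        intro hm j hj1 hjk hlt
        match m, hm with
        | 1, _ =>
          have : j = k := by omega
          rw [this]
          exact hαk
        | 2, _ =>
          have : j = k - 1 ∨ j = k := by omega
          rcases this with h | h <;> rw [h]
          · exact hβ1
          · exact hβ2
        | (p + 3), _ =>
          set q : ℕ := p + 2 with hq
          have hcq := hcomm 1 q (le_refl _) (by omega)
          have h := LinearMap.congr_fun hcq (f j)
          simp only [LinearMap.sub_apply, LinearMap.smul_apply, Module.End.mul_apply, Nat.cast_one] at h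
          -- first term : E 1 (E q (f j)) = 0
          have ht := hthread q (by omega) j
          rw [Submodule.mem_span_singleton] at ht
          obtain ⟨d, hd⟩ := ht
          have h1 : E 1 (E q (f j)) = 0 := by
            by_cases hcase : k < (q : ℤ) + j
            · rw [IH q (by omega) (by omega) j hj1 hjk hcase]
              exact map_zero _
            · have : (q : ℤ) + j = k := by omega
              rw [← hd, this, map_smul, hαk, smul_zero]
          -- second term : E q (E 1 (f j)) = 0
          have ht1 := hthread 1 (le_refl _) j
          rw [Submodule.mem_span_singleton] at ht1
          obtain ⟨c, hc⟩ := ht1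
          have h2 : E q (E 1 (f j)) = 0 := by
            by_cases hcase : j = k
            · rw [hcase, hαk, map_zero]
            · rw [← hc, map_smul,
                IH q (by omega) (by omega) (((1 : ℕ) : ℤ) + j) (by omega) (by omega) (by omega),
                smul_zero]
          rw [h1, h2, sub_zero] at h
          have hne : ((q : K) - 1) ≠ 0 := by
            rw [sub_ne_zero]
            exact_mod_cast (by omega : q ≠ 1)
          have := (smul_eq_zero.mp h.symm).resolve_left hne
          have hmq : 1 + q = p + 3 := by omega
          rwa [hmq] at this
    -- V1 invariant
    have hinv1 : ∀ i : ℕ, 1 ≤ i → ∀ v ∈ V1, E i v ∈ V1 := by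
      intro i hi v hv
      have : Submodule.map (E i) V1 ≤ V1 := by
        rw [hV1, Submodule.map_span]
        refine Submodule.span_le.mpr ?_
        rintro x ⟨y, ⟨j, ⟨hj1, hj2⟩, rfl⟩, rfl⟩
        by_cases hjk : (i : ℤ) + j ≤ k
        · have ht := hthread i hi j
          refine Submodule.span_le.mpr ?_ ht
          rintro z rfl
          exact Submodule.subset_span ⟨(i : ℤ) + j, ⟨by omega, hjk⟩, rfl⟩
        · rw [key i hi j hj1 hj2 (by omega)]
          exact Submodule.zero_mem _
      exact this ⟨v, hv, rfl⟩
    exact ⟨hcompl, hinv1, hinv2⟩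
end

section
/- Define a module structure over W+ on V = span{f_1,…,f_{n+1}} for n ≥ 2 by: e_i f_j = (j+2i−1) f_{i+j} for j ≥ 2 and i+j ≤ n+1; e_i f_1 = (i³−i) f_{i+1} for 1 ≤ i ≤ n; and e_i f_j = 0 whenever i+j > n+1. Then this indeed defines a W+-module, i.e., e_i(e_j f_m) − e_j(e_i f_m) = (j−i) e_{i+j} f_m for all i, j ≥ 1 and 1 ≤ m ≤ n+1. -/
/-- the formulas defining `Ṽ_{−2,−3}(n+1)` indeed give a
`W⁺`-module structure. -/
theorem stmt_18 {K : Type*} [Field K] [CharZero K]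
    {V : Type*} [AddCommGroup V] [Module K V]
    (n : ℕ) (hn : 2 ≤ n) (E : ℕ → Module.End K V) (f : ℕ → V)
    (h1 : ∀ i j : ℕ, 1 ≤ i → 2 ≤ j → i + j ≤ n + 1 →
      E i (f j) = ((j : K) + 2 * (i : K) - 1) • f (i + j))
    (h2 : ∀ i : ℕ, 1 ≤ i → i ≤ n →
      E i (f 1) = ((i : K) ^ 3 - (i : K)) • f (i + 1))
    (h0 : ∀ i j : ℕ, 1 ≤ i → 1 ≤ j → n + 1 < i + j → E i (f j) = 0) :
    ∀ i j : ℕ, 1 ≤ i → 1 ≤ j → ∀ m : ℕ, 1 ≤ m → m ≤ n + 1 →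
      E i (E j (f m)) - E j (E i (f m)) = ((j : K) - (i : K)) • E (i + j) (f m) := by
  intro i j hi hj m hm hmn
  by_cases hm1 : m = 1
  · subst hm1
    by_cases hij : i + j ≤ n
    · have hjn : j ≤ n := by omega
      have hin : i ≤ n := by omega
      rw [h2 j hj hjn, h2 i hi hin, map_smul, map_smul,
          h1 i (j + 1) hi (by omega) (by omega),
          h1 j (i + 1) hj (by omega) (by omega),
          h2 (i + j) (by omega) hij, smul_smul, smul_smul, smul_smul]
      have e1 : i + (j + 1) = i + j + 1 := by omega
      have e2 : j + (i + 1) = i + j + 1 := by omega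
      rw [e1, e2, ← sub_smul]
      congr 1
      push_cast
      ring
    · have hz : ∀ a b : ℕ, 1 ≤ a → 1 ≤ b → n < a + b → E a (E b (f 1)) = 0 := by
        intro a b ha hb hab
        by_cases hbn : b ≤ n
        · rw [h2 b hb hbn, map_smul,
            h0 a (b + 1) ha (by omega) (by omega), smul_zero]
        · rw [h0 b 1 hb le_rfl (by omega), map_zero]
      rw [hz i j hi hj (by omega), hz j i hj hi (by omega),
          h0 (i + j) 1 (by omega) le_rfl (by omega), smul_zero, sub_self]
  · have hm2 : 2 ≤ m := by omega
    by_cases hijm : i + j + m ≤ n + 1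
    · rw [h1 j m hj hm2 (by omega), h1 i m hi hm2 (by omega), map_smul, map_smul,
          h1 i (j + m) hi (by omega) (by omega),
          h1 j (i + m) hj (by omega) (by omega),
          h1 (i + j) m (by omega) hm2 (by omega),
          smul_smul, smul_smul, smul_smul]
      have e1 : i + (j + m) = i + j + m := by omega
      have e2 : j + (i + m) = i + j + m := by omega
      rw [e1, e2, ← sub_smul]
      congr 1
      push_cast
      ring
    · have hz : ∀ a b : ℕ, 1 ≤ a → 1 ≤ b → n + 1 < a + b + m →
          E a (E b (f m)) = 0 := by
        intro a b ha hb hab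
        by_cases hbm : b + m ≤ n + 1
        · rw [h1 b m hb hm2 hbm, map_smul,
            h0 a (b + m) ha (by omega) (by omega), smul_zero]
        · rw [h0 b m hb (by omega) (by omega), map_zero]
      rw [hz i j hi hj (by omega), hz j i hj hi (by omega),
          h0 (i + j) m (by omega) (by omega) (by omega), smul_zero, sub_self]
end

section
/- Fix integers n ≥ 2 and 1 ≤ k ≤ n−1. Define an action of W+ on V = span{f_1,…,f_{n+1}} by: e_i f_j = (j−k−1) f_{i+j} if k+1 ≤ j ≤ n+1 and i+j ≤ n+1; e_i f_j = (i+j−k−1) f_{i+j} if j < k+1 and i+j ≤ k+1; e_i f_j = f_{i+j} if j < k+1 and k+1 < i+j ≤ n+1; and e_i f_j = 0 if i+j > n+1. Then this defines a W+-module structure, i.e., e_i(e_j f_m) − e_j(e_i f_m) = (j−i) e_{i+j} f_m for all i, j ≥ 1 and all m, and it satisfies e_1 f_k = e_1 f_{k+1} = 0. -/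
noncomputable def cR (K : Type*) [Field K] (n k i j : ℕ) : K :=
  if n + 1 < i + j then 0
  else if k + 1 ≤ j then (j : K) - k - 1
  else if i + j ≤ k + 1 then (i : K) + j - k - 1
  else 1

lemma cR_scalar (K : Type*) [Field K] [CharZero K] (n k : ℕ)
    (hk1 : 1 ≤ k) (hkn : k + 1 ≤ n) (i j m : ℕ) (hi : 1 ≤ i) (hj : 1 ≤ j) (hm : 1 ≤ m) :
    cR K n k j m * cR K n k i (j + m) - cR K n k i m * cR K n k j (i + m)
      = ((j : K) - i) * cR K n k (i + j) m := by
  unfold cR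
  simp only [show i + (j + m) = i + j + m from by omega,
    show j + (i + m) = i + j + m from by omega]
  split_ifs <;>
  first
  | (exfalso; omega)
  | (push_cast; ring1)
  | (have h2 := congrArg (Nat.cast : ℕ → K) (show j + m = k + 1 by omega); push_cast at h2; push_cast; rw [show (m : K) = (k : K) + 1 - (j : K) from by linear_combination h2]; ring1)
  | (have h2 := congrArg (Nat.cast : ℕ → K) (show i + m = k + 1 by omega); push_cast at h2; push_cast; rw [show (m : K) = (k : K) + 1 - (i : K) from by linear_combination h2]; ring1)
  | (have h1 := congrArg (Nat.cast : ℕ → K) (show i = j by omega); have h2 := congrArg (Nat.cast : ℕ → K) (show j + m = k + 1 by omega); push_cast at h1 h2; push_cast; rw [show (i : K) = (j : K) from h1, show (m : K) = (k : K) + 1 - (j : K) from by linear_combination h2]; ring1)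
  | (have h2 := congrArg (Nat.cast : ℕ → K) (show i + j + m = k + 1 by omega); push_cast at h2; push_cast; rw [show (m : K) = (k : K) + 1 - (i : K) - (j : K) from by linear_combination h2]; ring1)

/-- the formulas defining the module `R_k` give a `W⁺`-module
structure with `e₁ f_k = e₁ f_{k+1} = 0`. -/
theorem stmt_19 {K : Type*} [Field K] [CharZero K]
    {V : Type*} [AddCommGroup V] [Module K V]
    (n k : ℕ) (hn : 2 ≤ n) (hk1 : 1 ≤ k) (hkn : k ≤ n - 1)
    (E : ℕ → Module.End K V) (f : ℕ → V)
    (h1 : ∀ i j : ℕ, 1 ≤ i → k + 1 ≤ j → j ≤ n + 1 → i + j ≤ n + 1 →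
      E i (f j) = ((j : K) - (k : K) - 1) • f (i + j))
    (h2 : ∀ i j : ℕ, 1 ≤ i → 1 ≤ j → j < k + 1 → i + j ≤ k + 1 →
      E i (f j) = ((i : K) + (j : K) - (k : K) - 1) • f (i + j))
    (h3 : ∀ i j : ℕ, 1 ≤ i → 1 ≤ j → j < k + 1 → k + 1 < i + j → i + j ≤ n + 1 →
      E i (f j) = f (i + j))
    (h0 : ∀ i j : ℕ, 1 ≤ i → 1 ≤ j → n + 1 < i + j → E i (f j) = 0) :
    (∀ i j : ℕ, 1 ≤ i → 1 ≤ j → ∀ m : ℕ, 1 ≤ m → m ≤ n + 1 →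
      E i (E j (f m)) - E j (E i (f m)) = ((j : K) - (i : K)) • E (i + j) (f m)) ∧
    E 1 (f k) = 0 ∧ E 1 (f (k + 1)) = 0 := by
  have hkn' : k + 1 ≤ n := by omega
  have key : ∀ a b : ℕ, 1 ≤ a → 1 ≤ b → E a (f b) = cR K n k a b • f (a + b) := by
    intro a b ha hb
    unfold cR
    split_ifs with c1 c2 c3
    · rw [h0 a b ha hb c1, zero_smul]
    · exact h1 a b ha c2 (by omega) (by omega)
    · exact h2 a b ha hb (by omega) c3
    · rw [h3 a b ha hb (by omega) (by omega) (by omega), one_smul]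
  refine ⟨?_, ?_, ?_⟩
  · intro i j hi hj m hm hmn
    rw [key j m hj hm, map_smul, key i (j + m) hi (by omega),
        key i m hi hm, map_smul, key j (i + m) hj (by omega),
        key (i + j) m (by omega) hm, smul_smul, smul_smul, smul_smul,
        show i + (j + m) = i + j + m from by omega,
        show j + (i + m) = i + j + m from by omega, ← sub_smul,
        cR_scalar K n k hk1 hkn' i j m hi hj hm]
  · rw [key 1 k le_rfl hk1]
    unfold cR
    rw [if_neg (by omega), if_neg (by omega), if_pos (by omega)]
    push_cast
    rw [show (1 : K) + k - k - 1 = 0 from by ring, zero_smul]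
  · rw [key 1 (k + 1) le_rfl (by omega)]
    unfold cR
    rw [if_neg (by omega), if_pos (by omega)]
    push_cast
    rw [show (k : K) + 1 - k - 1 = 0 from by ring, zero_smul]
end
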